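/- arXiv:1111.0855 — 2 statements merged into one kernel-verified Lean document; each statement's English description precedes it below -/
import Mathlib

section
/- In the Euclidean plane, there do not exist four points, all lying within a closed disk of radius 2R centered at a point u (R > 0), that are pairwise at distance strictly greater than 2√2·R. In particular, since 2√2·R < 3R, no four points in the disk of radius 2R can be pairwise more than 3R apart. -/
private lemma four_coords_key (R x1 y1 x2 y2 x3 y3 x4 y4 : ℝ) (hR : 0 < R)
    (h1 : x1^2 + y1^2 ≤ 4*R^2) (h2 : x2^2 + y2^2 ≤ 4*R^2)
    (h3 : x3^2 + y3^2 ≤ 4*R^2) (h4 : x4^2 + y4^2 ≤ 4*R^2)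
    (h12 : 8*R^2 < (x1-x2)^2 + (y1-y2)^2)
    (h13 : 8*R^2 < (x1-x3)^2 + (y1-y3)^2)
    (h14 : 8*R^2 < (x1-x4)^2 + (y1-y4)^2)
    (h23 : 8*R^2 < (x2-x3)^2 + (y2-y3)^2)
    (h24 : 8*R^2 < (x2-x4)^2 + (y2-y4)^2)
    (h34 : 8*R^2 < (x3-x4)^2 + (y3-y4)^2) : False := by
  -- pairwise inner products are negative
  have exp : ∀ a b c d : ℝ, (a-c)^2 + (b-d)^2 = a^2+b^2 + (c^2+d^2) - 2*(a*c+b*d) := by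
    intros; ring
  have p12 : x1*x2 + y1*y2 < 0 := by have := exp x1 y1 x2 y2; linarith
  have p13 : x1*x3 + y1*y3 < 0 := by have := exp x1 y1 x3 y3; linarith
  have p14 : x1*x4 + y1*y4 < 0 := by have := exp x1 y1 x4 y4; linarith
  have p23 : x2*x3 + y2*y3 < 0 := by have := exp x2 y2 x3 y3; linarith
  have p24 : x2*x4 + y2*y4 < 0 := by have := exp x2 y2 x4 y4; linarith
  have p34 : x3*x4 + y3*y4 < 0 := by have := exp x3 y3 x4 y4; linarith
  -- v1 is nonzero
  have h0 : 0 < x1^2 + y1^2 := by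
    rcases lt_or_ge 0 (x1^2 + y1^2) with h | h
    · exact h
    · have hx : x1^2 = 0 := le_antisymm (by nlinarith [sq_nonneg y1]) (sq_nonneg x1)
      have hy : y1^2 = 0 := le_antisymm (by nlinarith [sq_nonneg x1]) (sq_nonneg y1)
      rw [pow_eq_zero_iff two_ne_zero] at hx hy
      rw [hx, hy] at p12
      simp at p12
  set b2 := x1*y2 - y1*x2 with hb2
  set b3 := x1*y3 - y1*x3 with hb3
  set b4 := x1*y4 - y1*x4 with hb4
  have q23 : b2*b3 < 0 := by
    have id : (x1*x2+y1*y2)*(x1*x3+y1*y3) + b2*b3 = (x1^2+y1^2)*(x2*x3+y2*y3) := by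
      rw [hb2, hb3]; ring
    linarith [mul_pos (neg_pos.2 p12) (neg_pos.2 p13), mul_neg_of_pos_of_neg h0 p23, id]
  have q24 : b2*b4 < 0 := by
    have id : (x1*x2+y1*y2)*(x1*x4+y1*y4) + b2*b4 = (x1^2+y1^2)*(x2*x4+y2*y4) := by
      rw [hb2, hb4]; ring
    linarith [mul_pos (neg_pos.2 p12) (neg_pos.2 p14), mul_neg_of_pos_of_neg h0 p24, id]
  have q34 : b3*b4 < 0 := by
    have id : (x1*x3+y1*y3)*(x1*x4+y1*y4) + b3*b4 = (x1^2+y1^2)*(x3*x4+y3*y4) := by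
      rw [hb3, hb4]; ring
    linarith [mul_pos (neg_pos.2 p13) (neg_pos.2 p14), mul_neg_of_pos_of_neg h0 p34, id]
  have hid : (b2*b3)*((b2*b4)*(b3*b4)) = (b2*b3*b4)^2 := by ring
  linarith [sq_nonneg (b2*b3*b4), mul_pos (mul_pos_of_neg_of_neg q24 q34) (neg_pos.2 q23), hid]

theorem no_four_points_in_disk_pairwise_far
    (R : ℝ) (hR : 0 < R) (u : EuclideanSpace ℝ (Fin 2)) :
    ¬ ∃ v₁ v₂ v₃ v₄ : EuclideanSpace ℝ (Fin 2),
      dist v₁ u ≤ 2 * R ∧ dist v₂ u ≤ 2 * R ∧ dist v₃ u ≤ 2 * R ∧ dist v₄ u ≤ 2 * R ∧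
      2 * Real.sqrt 2 * R < dist v₁ v₂ ∧ 2 * Real.sqrt 2 * R < dist v₁ v₃ ∧
      2 * Real.sqrt 2 * R < dist v₁ v₄ ∧ 2 * Real.sqrt 2 * R < dist v₂ v₃ ∧
      2 * Real.sqrt 2 * R < dist v₂ v₄ ∧ 2 * Real.sqrt 2 * R < dist v₃ v₄ := by
  rintro ⟨v₁, v₂, v₃, v₄, h1, h2, h3, h4, h12, h13, h14, h23, h24, h34⟩
  have hds : ∀ a b : EuclideanSpace ℝ (Fin 2),
      dist a b ^ 2 = (a 0 - b 0)^2 + (a 1 - b 1)^2 := by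
    intro a b
    rw [EuclideanSpace.dist_eq, Real.sq_sqrt (by positivity)]
    simp [Fin.sum_univ_two, Real.dist_eq, sq_abs]
  have sq2 : Real.sqrt 2 ^ 2 = 2 := Real.sq_sqrt (by norm_num)
  have key : ∀ a : EuclideanSpace ℝ (Fin 2), dist a u ≤ 2 * R →
      (a 0 - u 0)^2 + (a 1 - u 1)^2 ≤ 4*R^2 := by
    intro a ha
    have := hds a u
    nlinarith [dist_nonneg (x := a) (y := u)]
  have far : ∀ a b : EuclideanSpace ℝ (Fin 2), 2 * Real.sqrt 2 * R < dist a b →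
      8*R^2 < (a 0 - u 0 - (b 0 - u 0))^2 + (a 1 - u 1 - (b 1 - u 1))^2 := by
    intro a b hab
    have hpos : 0 ≤ 2 * Real.sqrt 2 * R := by positivity
    have h' : (2 * Real.sqrt 2 * R)^2 < dist a b ^ 2 :=
      pow_lt_pow_left₀ hab hpos two_ne_zero
    have := hds a b
    nlinarith [sq2]
  exact four_coords_key R (v₁ 0 - u 0) (v₁ 1 - u 1) (v₂ 0 - u 0) (v₂ 1 - u 1)
    (v₃ 0 - u 0) (v₃ 1 - u 1) (v₄ 0 - u 0) (v₄ 1 - u 1) hR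
    (key _ h1) (key _ h2) (key _ h3) (key _ h4)
    (far _ _ h12) (far _ _ h13) (far _ _ h14) (far _ _ h23) (far _ _ h24) (far _ _ h34)
end

section
/- Let G be a finite simple graph with an injective priority function. The distributed 3-hop coloring (each uncolored vertex colors itself when it has the highest priority among uncolored vertices within distance 3, choosing the smallest color unused within distance 3) assigns to every vertex exactly the same color as the sequential First Fit algorithm that colors all vertices in decreasing priority order, each taking the smallest color unused within distance 3. -/
/-- The distributed 3-hop coloring assigns to every vertex the same color as the
sequential First Fit algorithm processing vertices in decreasing priority order. -/
theorem distributed_coloring_eq_first_fit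
    (V : Type*) [Fintype V] (G : SimpleGraph V)
    (priority : V → ℕ) (hprio : Function.Injective priority)
    (C : ℕ → Set V) (d : V → ℕ) (c : V → ℕ)
    (hC0 : C 0 = ∅)
    (hCstep : ∀ t : ℕ, C (t + 1) = C t ∪ {u : V | u ∉ C t ∧
      ∀ v : V, v ∉ C t → v ≠ u → G.edist u v ≤ 3 → priority v < priority u})
    (hcov : ∀ u : V, ∃ t : ℕ, u ∈ C (t + 1) \ C t)
    (hd : ∀ t : ℕ, ∀ u : V, u ∈ C (t + 1) \ C t →
      d u = sInf {n : ℕ | ∀ v : V, v ∈ C t → G.edist u v ≤ 3 → d v ≠ n})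
    (hc : ∀ u : V, c u = sInf {n : ℕ |
      ∀ v : V, v ≠ u → G.edist u v ≤ 3 → priority u < priority v → c v ≠ n}) :
    d = c := by
  classical
  -- monotonicity of C
  have hmono : ∀ s t : ℕ, s ≤ t → C s ⊆ C t := by
    intro s t hst
    induction t with
    | zero =>
      have : s = 0 := Nat.le_zero.mp hst
      subst this; exact subset_rfl
    | succ t ih =>
      rcases eq_or_lt_of_le hst with h | h
      · subst h; exact subset_rfl
      · have hs : s ≤ t := Nat.lt_succ_iff.mp h
        intro x hx
        rw [hCstep t]
        exact Set.mem_union_left _ (ih hs hx)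
  -- key characterization: when u is newly colored at step t, the colored
  -- vertices within distance 3 are exactly the higher-priority ones.
  have hkey : ∀ t : ℕ, ∀ u : V, u ∈ C (t + 1) \ C t →
      ∀ v : V, G.edist u v ≤ 3 → (v ∈ C t ↔ priority u < priority v) := by
    intro t u hut v hdist
    obtain ⟨hu1, hu0⟩ := hut
    rw [hCstep t] at hu1
    rcases hu1 with h | h
    · exact absurd h hu0
    obtain ⟨-, hmax⟩ := h
    constructor
    · intro hvC
      obtain ⟨s, hvs1, hvs0⟩ := hcov v
      -- s < t since v ∈ C t but v ∉ C s
      have hst : s < t := by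
        by_contra hle
        push_neg at hle
        exact hvs0 (hmono t s hle hvC)
      have hus : u ∉ C s := fun hu => hu0 (hmono s t hst.le hu)
      rw [hCstep s] at hvs1
      rcases hvs1 with h | h
      · exact absurd h hvs0
      obtain ⟨-, hvmax⟩ := h
      have hne : u ≠ v := fun h => hu0 (h ▸ hvC)
      have hdist' : G.edist v u ≤ 3 := by rwa [SimpleGraph.edist_comm]
      exact hvmax u hus hne hdist'
    · intro hpr
      by_contra hv
      have hne : v ≠ u := fun h => lt_irrefl _ (h ▸ hpr)
      exact absurd (hmax v hv hne hdist) (not_lt.mpr hpr.le)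
  -- measure: number of higher-priority vertices
  set m : V → ℕ := fun u => (Finset.univ.filter (fun w => priority u < priority w)).card
    with hm_def
  have hcard : ∀ u v : V, priority u < priority v → m v < m u := by
    intro u v hv
    apply Finset.card_lt_card
    rw [Finset.ssubset_def]
    constructor
    · intro w hw
      simp only [Finset.mem_filter, Finset.mem_univ, true_and] at *
      exact hv.trans hw
    · intro hsub
      have := hsub (Finset.mem_filter.mpr ⟨Finset.mem_univ v, hv⟩)
      simp only [Finset.mem_filter] at this
      exact lt_irrefl _ this.2
  -- main induction on the measure
  have main : ∀ n : ℕ, ∀ u : V, m u = n → d u = c u := by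
    intro n
    induction n using Nat.strong_induction_on with
    | _ n ih =>
      intro u hu
      obtain ⟨t, hut⟩ := hcov u
      have hsets : {k : ℕ | ∀ v : V, v ∈ C t → G.edist u v ≤ 3 → d v ≠ k} =
          {k : ℕ | ∀ v : V, v ≠ u → G.edist u v ≤ 3 → priority u < priority v → c v ≠ k} := by
        ext k
        simp only [Set.mem_setOf_eq]
        constructor
        · intro h v _ hdist hpr
          have hvC : v ∈ C t := (hkey t u hut v hdist).mpr hpr
          have hdc : d v = c v := ih (m v) (hu ▸ hcard u v hpr) v rfl
          rw [← hdc]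
          exact h v hvC hdist
        · intro h v hvC hdist
          have hpr : priority u < priority v := (hkey t u hut v hdist).mp hvC
          have hne : v ≠ u := fun he => hut.2 (he ▸ hvC)
          have hdc : d v = c v := ih (m v) (hu ▸ hcard u v hpr) v rfl
          rw [hdc]
          exact h v hne hdist hpr
      rw [hd t u hut, hc u, hsets]
  funext u
  exact main (m u) u rfl
end
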